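/- Let f: ℝⁿ → ℝ be strongly convex with b ∈ range(A). Then x̂ is the unique solution of min f(x) subject to Ax = b if and only if there exists ŷ ∈ ℝᵐ with Ax̂ = b and x̂ = ∇f*(Aᵀŷ), where ŷ is a minimizer of the dual function Ψ(y) = f*(Aᵀy) - bᵀy. -/

import Mathlib

/-!
Strong convexity makes `f - ⟪s, ·⟫` coercive, so the supremum defining `f* s` is attained; at a
maximizer `x`, the point `s` minimizes `f* - ⟪·, x⟫`, so `x = ∇f*(s)`. Hence Fenchel–Young
`⟪s, x⟫ - f x ≤ f* s` is an equality exactly at `x = ∇f*(s)`. For `⇐`, take `s = Aᵀŷ`: all feasible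
`x` have the same `⟪Aᵀŷ, x⟫ = bᵀŷ`, so `∇f*(Aᵀŷ)` minimizes `f` among them. For `⇒`, once
`Ax̂ = b` the dual objective is `f*(Aᵀy) - ⟪Aᵀy, x̂⟫`, which grows like `‖Aᵀy‖` and so attains its
minimum on `range Aᵀ` at some `s`; the first-order condition there says that `∇f*(s)` is feasible,
and primal optimality of `x̂` then makes `x̂` a maximizer for `f* s`, i.e. `x̂ = ∇f*(s)`.
-/

/-- The Fenchel conjugate `f*(x*) = sup_y ⟨x*, y⟩ - f(y)`. -/
noncomputable def fenchel {n : ℕ} (f : EuclideanSpace ℝ (Fin n) → ℝ)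
    (xs : EuclideanSpace ℝ (Fin n)) : ℝ := ⨆ y, inner ℝ xs y - f y

open Set Filter InnerProductSpace RealInnerProductSpace

theorem ConvexOn.sub_mul_norm_le_apply {E : Type*} [NormedAddCommGroup E] [NormedSpace ℝ E]
    {c : E → ℝ} {K : ℝ} (hc : ConvexOn ℝ univ c) (hK : ∀ u, ‖u‖ ≤ 1 → c u ≤ K) (y : E) :
    c 0 - (K - c 0) * ‖y‖ ≤ c y := by
  rcases eq_or_ne y 0 with rfl | hy
  · simp
  set t := ‖y‖
  have ht : 0 < t := norm_pos_iff.mpr hy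
  -- `0` lies on the segment from `y` to the unit vector `-t⁻¹ • y`, with weights `1 : t`
  have hzero : (t / (1 + t)) • (-t⁻¹ • y) + (1 / (1 + t)) • y = 0 := by
    rw [smul_smul, ← add_smul]
    convert zero_smul ℝ y
    field_simp
    ring
  have hconv : c ((t / (1 + t)) • (-t⁻¹ • y) + (1 / (1 + t)) • y)
      ≤ (t / (1 + t)) • c (-t⁻¹ • y) + (1 / (1 + t)) • c y :=
    hc.2 (mem_univ _) (mem_univ _) (by positivity) (by positivity) (by field_simp; ring)
  rw [hzero, smul_eq_mul, smul_eq_mul] at hconv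
  have hu : c (-t⁻¹ • y) ≤ K := hK _ <| by
    rw [norm_smul, norm_neg, norm_inv, norm_norm, inv_mul_cancel₀ ht.ne']
  have h1t : 0 < 1 + t := by positivity
  rw [div_mul_eq_mul_div, div_mul_eq_mul_div, ← add_div, le_div_iff₀ h1t] at hconv
  nlinarith

theorem HasGradientAt.inner_eq_of_forall_le {E : Type*} [NormedAddCommGroup E]
    [InnerProductSpace ℝ E] [CompleteSpace E] {φ : E → ℝ} {x v w d : E}
    (h : HasGradientAt φ d x) (hmin : ∀ t : ℝ, φ x - ⟪x, w⟫ ≤ φ (x + t • v) - ⟪x + t • v, w⟫) :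
    ⟪d, v⟫ = ⟪w, v⟫ := by
  have hline : HasDerivAt (fun t : ℝ => x + t • v) v 0 := by
    simpa using ((hasDerivAt_id (0 : ℝ)).smul_const v).const_add x
  have hinner : HasFDerivAt (fun y => ⟪y, w⟫) (toDual ℝ E w) (x + (0 : ℝ) • v) :=
    (toDual ℝ E w).hasFDerivAt.congr_of_eventuallyEq
      (Eventually.of_forall fun y => by simp [real_inner_comm])
  have hderiv := ((hasGradientAt_iff_hasFDerivAt.mp (by simpa using h)).sub hinner).comp_hasDerivAt
    (0 : ℝ) hline
  have hloc : IsLocalMin (fun t : ℝ => φ (x + t • v) - ⟪x + t • v, w⟫) 0 :=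
    Eventually.of_forall fun t => by simpa using hmin t
  simpa [sub_eq_zero, real_inner_comm] using hloc.hasDerivAt_eq_zero hderiv

section StrongConvex

variable {E : Type*} [NormedAddCommGroup E] [InnerProductSpace ℝ E] [FiniteDimensional ℝ E]
  {α : ℝ} {f : E → ℝ}

theorem StrongConvexOn.continuous (hf : StrongConvexOn univ α f) : Continuous f := by
  have hc := (strongConvexOn_iff_convex.mp hf).continuousOn isOpen_univ
  exact ((continuousOn_univ.mp hc).add (by fun_prop : Continuous fun x : E => α / 2 * ‖x‖ ^ 2)).congr
    fun x => sub_add_cancel _ _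

theorem StrongConvexOn.exists_quadratic_le_apply (hf : StrongConvexOn univ α f) :
    ∃ B C : ℝ, ∀ y, α / 2 * ‖y‖ ^ 2 - B * ‖y‖ + C ≤ f y := by
  set c : E → ℝ := fun x => f x - α / 2 * ‖x‖ ^ 2
  have hc : ConvexOn ℝ univ c := strongConvexOn_iff_convex.mp hf
  obtain ⟨K, hK⟩ := (isCompact_closedBall (0 : E) 1).bddAbove_image
    ((hc.continuousOn isOpen_univ).mono (subset_univ _))
  refine ⟨K - c 0, c 0, fun y => ?_⟩
  have := hc.sub_mul_norm_le_apply (K := K) (fun u hu => hK ⟨u, by simpa using hu, rfl⟩) y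
  simp only [c] at this ⊢
  linarith

theorem StrongConvexOn.tendsto_sub_inner_cocompact (hα : 0 < α) (hf : StrongConvexOn univ α f)
    (s : E) : Tendsto (fun y => f y - ⟪s, y⟫) (cocompact E) atTop := by
  obtain ⟨B, C, hBC⟩ := hf.exists_quadratic_le_apply
  have hq : Tendsto (fun r : ℝ => r * (α / 2 * r - (B + ‖s‖)) + C) atTop atTop :=
    tendsto_atTop_add_const_right _ _ <| tendsto_id.atTop_mul_atTop₀ <|
      tendsto_atTop_add_const_right _ _ (tendsto_id.const_mul_atTop (half_pos hα))
  refine tendsto_atTop_mono (fun y => ?_) (hq.comp tendsto_norm_cocompact_atTop)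
  simp only [Function.comp]
  nlinarith [real_inner_le_norm s y, hBC y, norm_nonneg s, norm_nonneg y]

theorem StrongConvexOn.exists_forall_inner_sub_le (hα : 0 < α) (hf : StrongConvexOn univ α f)
    (s : E) : ∃ y₀, ∀ y, ⟪s, y⟫ - f y ≤ ⟪s, y₀⟫ - f y₀ := by
  obtain ⟨y₀, hy₀⟩ := Continuous.exists_forall_le (f := fun y => f y - ⟪s, y⟫)
    (hf.continuous.sub (continuous_const.inner continuous_id)) (hf.tendsto_sub_inner_cocompact hα s)
  exact ⟨y₀, fun y => by linarith [hy₀ y]⟩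

end StrongConvex

section Fenchel

variable {n : ℕ} {α : ℝ} {f : EuclideanSpace ℝ (Fin n) → ℝ}

theorem inner_sub_le_fenchel (hα : 0 < α) (hf : StrongConvexOn univ α f)
    (s y : EuclideanSpace ℝ (Fin n)) : ⟪s, y⟫ - f y ≤ fenchel f s :=
  have ⟨_, hy₀⟩ := hf.exists_forall_inner_sub_le hα s
  le_ciSup ⟨_, forall_mem_range.2 hy₀⟩ y

theorem exists_inner_sub_eq_fenchel (hα : 0 < α) (hf : StrongConvexOn univ α f)
    (s : EuclideanSpace ℝ (Fin n)) : ∃ y₀, ⟪s, y₀⟫ - f y₀ = fenchel f s :=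
  have ⟨y₀, hy₀⟩ := hf.exists_forall_inner_sub_le hα s
  ⟨y₀, le_antisymm (inner_sub_le_fenchel hα hf s y₀) (ciSup_le hy₀)⟩

theorem eq_of_inner_sub_eq_fenchel (hα : 0 < α) (hf : StrongConvexOn univ α f)
    {s x d : EuclideanSpace ℝ (Fin n)} (hd : HasGradientAt (fenchel f) d s)
    (hx : ⟪s, x⟫ - f x = fenchel f s) : x = d := by
  have hdx : ⟪d, d - x⟫ = ⟪x, d - x⟫ := hd.inner_eq_of_forall_le fun t => by
    linarith [inner_sub_le_fenchel hα hf (s + t • (d - x)) x]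
  have : ⟪d - x, d - x⟫ = 0 := by rw [inner_sub_left, hdx, sub_self]
  exact (sub_eq_zero.mp (inner_self_eq_zero.mp this)).symm

theorem fenchel_eq_inner_sub_of_hasGradientAt (hα : 0 < α) (hf : StrongConvexOn univ α f)
    {s d : EuclideanSpace ℝ (Fin n)} (hd : HasGradientAt (fenchel f) d s) :
    fenchel f s = ⟪s, d⟫ - f d := by
  obtain ⟨y₀, hy₀⟩ := exists_inner_sub_eq_fenchel hα hf s
  rw [← eq_of_inner_sub_eq_fenchel hα hf hd hy₀, hy₀]

theorem tendsto_fenchel_sub_inner_cocompact (hα : 0 < α) (hf : StrongConvexOn univ α f)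
    (x : EuclideanSpace ℝ (Fin n)) :
    Tendsto (fun s => fenchel f s - ⟪s, x⟫) (cocompact _) atTop := by
  obtain ⟨K, hK⟩ := (isCompact_closedBall x 1).bddAbove_image hf.continuous.continuousOn
  refine tendsto_atTop_mono (fun s => ?_)
    (tendsto_atTop_add_const_right _ (-K) tendsto_norm_cocompact_atTop)
  have hu : ‖‖s‖⁻¹ • s‖ ≤ 1 := by
    rw [norm_smul, norm_inv, norm_norm]
    exact inv_mul_le_one_of_le₀ le_rfl (norm_nonneg _)
  have hfu : f (x + ‖s‖⁻¹ • s) ≤ K := hK ⟨_, by simpa [dist_eq_norm] using hu, rfl⟩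
  have hinner : ⟪s, x + ‖s‖⁻¹ • s⟫ = ⟪s, x⟫ + ‖s‖ := by
    rw [inner_add_right, real_inner_smul_right, real_inner_self_eq_norm_sq, sq, ← mul_assoc,
      inv_mul_mul_self]
  linarith [inner_sub_le_fenchel hα hf s (x + ‖s‖⁻¹ • s)]

theorem exists_isMinOn_fenchel_sub_inner (hα : 0 < α) (hf : StrongConvexOn univ α f)
    (hcont : Continuous (fenchel f)) (S : Submodule ℝ (EuclideanSpace ℝ (Fin n)))
    (x : EuclideanSpace ℝ (Fin n)) : ∃ s ∈ S, IsMinOn (fun t => fenchel f t - ⟪t, x⟫) S s :=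
  ContinuousOn.exists_isMinOn' (hcont.sub (continuous_id.inner continuous_const)).continuousOn
    S.closed_of_finiteDimensional S.zero_mem
    (((tendsto_fenchel_sub_inner_cocompact hα hf x).eventually (eventually_ge_atTop _)).filter_mono
      inf_le_left)

theorem eq_gradient_of_isMinOn_fenchel_sub_inner (hα : 0 < α) (hf : StrongConvexOn univ α f)
    {S : Submodule ℝ (EuclideanSpace ℝ (Fin n))} {xhat s d : EuclideanSpace ℝ (Fin n)}
    (hopt : ∀ x, x - xhat ∈ Sᗮ → f xhat ≤ f x) (hs : s ∈ S)
    (hmin : IsMinOn (fun t => fenchel f t - ⟪t, xhat⟫) S s) (hd : HasGradientAt (fenchel f) d s) :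
    xhat = d := by
  have horth : ∀ v ∈ S, ⟪d, v⟫ = ⟪xhat, v⟫ := fun v hv =>
    hd.inner_eq_of_forall_le fun t => hmin (S.add_mem hs (S.smul_mem t hv))
  have hfeas : d - xhat ∈ Sᗮ := (Submodule.mem_orthogonal' _ _).2 fun v hv => by
    rw [inner_sub_left, horth v hv, sub_self]
  refine eq_of_inner_sub_eq_fenchel hα hf hd (le_antisymm (inner_sub_le_fenchel hα hf s xhat) ?_)
  calc fenchel f s = ⟪s, d⟫ - f d := fenchel_eq_inner_sub_of_hasGradientAt hα hf hd
    _ ≤ ⟪s, xhat⟫ - f xhat := by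
      rw [real_inner_comm, horth s hs, real_inner_comm]
      linarith [hopt d hfeas]

end Fenchel

namespace Matrix

variable {ι κ : Type*} [Fintype ι] [Fintype κ]

def transposeMulVecL (A : Matrix ι κ ℝ) : (ι → ℝ) →ₗ[ℝ] EuclideanSpace ℝ κ where
  toFun y := WithLp.toLp 2 (Aᵀ *ᵥ y)
  map_add' y z := by simp [mulVec_add]
  map_smul' c y := by simp [mulVec_smul]

theorem inner_transposeMulVecL (A : Matrix ι κ ℝ) (y : ι → ℝ) (x : EuclideanSpace ℝ κ) :
    ⟪A.transposeMulVecL y, x⟫ = A *ᵥ x ⬝ᵥ y := by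
  rw [EuclideanSpace.inner_eq_star_dotProduct]
  simp [transposeMulVecL, mulVec_transpose, dotProduct_mulVec, dotProduct_comm]

theorem mem_orthogonal_range_transposeMulVecL_iff (A : Matrix ι κ ℝ) (w : EuclideanSpace ℝ κ) :
    w ∈ (LinearMap.range A.transposeMulVecL)ᗮ ↔ A *ᵥ w = 0 := by
  simp only [Submodule.mem_orthogonal, LinearMap.mem_range, forall_exists_index,
    forall_apply_eq_imp_iff, inner_transposeMulVecL, dotProduct_eq_zero_iff]

end Matrix

theorem primal_dual_optimality_general {m n : ℕ} (α : ℝ) (hα : 0 < α)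
    (A : Matrix (Fin m) (Fin n) ℝ) (b : Fin m → ℝ)
    (f : EuclideanSpace ℝ (Fin n) → ℝ)
    (hf : StrongConvexOn Set.univ α f)
    (g : EuclideanSpace ℝ (Fin n) → EuclideanSpace ℝ (Fin n))
    (hg : ∀ xs, HasGradientAt (fenchel f) (g xs) xs)
    (Ψ : (Fin m → ℝ) → ℝ)
    (hΨ : ∀ y, Ψ y = fenchel f (WithLp.toLp 2 (A.transpose.mulVec y) : EuclideanSpace ℝ (Fin n)) - ∑ i, b i * y i)
    (xhat : EuclideanSpace ℝ (Fin n)) :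
    (A.mulVec xhat = b ∧ ∀ x : EuclideanSpace ℝ (Fin n), A.mulVec x = b → f xhat ≤ f x) ↔
    (∃ yhat : Fin m → ℝ, (∀ y, Ψ yhat ≤ Ψ y) ∧ A.mulVec xhat = b ∧
      xhat = g (WithLp.toLp 2 (A.transpose.mulVec yhat) : EuclideanSpace ℝ (Fin n))) := by
  constructor
  · rintro ⟨hAx, hopt⟩
    have hΨ' : ∀ y, Ψ y = fenchel f (A.transposeMulVecL y) - ⟪A.transposeMulVecL y, xhat⟫ :=
      fun y => by rw [hΨ, Matrix.inner_transposeMulVecL, hAx]; rfl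
    have hcont : Continuous (fenchel f) := continuous_iff_continuousAt.2 fun s => (hg s).continuousAt
    obtain ⟨_, ⟨yhat, rfl⟩, hmin⟩ :=
      exists_isMinOn_fenchel_sub_inner hα hf hcont (LinearMap.range A.transposeMulVecL) xhat
    refine ⟨yhat, fun y => ?_, hAx, ?_⟩
    · rw [hΨ', hΨ']
      exact hmin (LinearMap.mem_range_self _ y)
    · refine eq_gradient_of_isMinOn_fenchel_sub_inner hα hf (fun x hx => hopt x ?_)
        (LinearMap.mem_range_self _ _) hmin (hg _)
      rwa [Matrix.mem_orthogonal_range_transposeMulVecL_iff, WithLp.ofLp_sub, Matrix.mulVec_sub,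
        hAx, sub_eq_zero] at hx
  · rintro ⟨yhat, -, hAx, hxg⟩
    refine ⟨hAx, fun x hx => ?_⟩
    have hd : HasGradientAt (fenchel f) xhat (A.transposeMulVecL yhat) := hxg ▸ hg _
    have := inner_sub_le_fenchel hα hf (A.transposeMulVecL yhat) x
    rw [fenchel_eq_inner_sub_of_hasGradientAt hα hf hd, Matrix.inner_transposeMulVecL,
      Matrix.inner_transposeMulVecL, hx, hAx] at this
    linarith

/-- Primal–dual optimality: `x̂` solves `min f(x) s.t. Ax = b` iff there is a
minimizer `ŷ` of the dual `Ψ(y) = f*(Aᵀy) - bᵀy` with `Ax̂ = b` and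
`x̂ = ∇f*(Aᵀŷ)`. -/
theorem primal_dual_optimality {m n : ℕ} (α : ℝ) (hα : 0 < α)
    (A : Matrix (Fin m) (Fin n) ℝ) (b : Fin m → ℝ)
    (hb : b ∈ Set.range A.mulVec)
    (f : EuclideanSpace ℝ (Fin n) → ℝ)
    (hf : StrongConvexOn Set.univ α f)
    (g : EuclideanSpace ℝ (Fin n) → EuclideanSpace ℝ (Fin n))
    (hg : ∀ xs, HasGradientAt (fenchel f) (g xs) xs)
    (Ψ : (Fin m → ℝ) → ℝ)
    (hΨ : ∀ y, Ψ y = fenchel f (WithLp.toLp 2 (A.transpose.mulVec y) : EuclideanSpace ℝ (Fin n)) - ∑ i, b i * y i)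
    (xhat : EuclideanSpace ℝ (Fin n)) :
    (A.mulVec xhat = b ∧ ∀ x : EuclideanSpace ℝ (Fin n), A.mulVec x = b → f xhat ≤ f x) ↔
    (∃ yhat : Fin m → ℝ, (∀ y, Ψ yhat ≤ Ψ y) ∧ A.mulVec xhat = b ∧
      xhat = g (WithLp.toLp 2 (A.transpose.mulVec yhat) : EuclideanSpace ℝ (Fin n))) :=
  primal_dual_optimality_general α hα A b f hf g hg Ψ hΨ xhat
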